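/- arXiv:1606.04447 — 3 statements merged into one kernel-verified Lean document; each statement's English description precedes it below -/
import Mathlib

section
/- Let G be a finite simple vertex decomposable graph. If x is a simplicial vertex of G, then every neighbour of x is a shedding vertex of G, i.e., N(x) ⊆ Shed(G). -/
open scoped Classical

variable {V : Type*}

/-- `S` is an independent set of the induced subgraph of `G` on the vertex set `A`. -/
def IsIndepIn (G : SimpleGraph V) (A S : Finset V) : Prop :=
  S ⊆ A ∧ ∀ u ∈ S, ∀ v ∈ S, ¬ G.Adj u v

/-- `S` is a maximal independent set of the induced subgraph of `G` on the vertex set `A`. -/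
def IsMaxIndepIn (G : SimpleGraph V) (A S : Finset V) : Prop :=
  IsIndepIn G A S ∧ ∀ T, IsIndepIn G A T → S ⊆ T → T = S

/-- The induced subgraph of `G` on the vertex set `A` is well-covered: all of its
maximal independent sets have the same cardinality. -/
def WellCoveredOn (G : SimpleGraph V) (A : Finset V) : Prop :=
  ∀ S T, IsMaxIndepIn G A S → IsMaxIndepIn G A T → S.card = T.card

/-- The closed neighbourhood of `x` deleted from `A`: the vertices of `A` distinct from `x`
and not adjacent to `x`. -/
noncomputable def delClosedNbhd (G : SimpleGraph V) (A : Finset V) (x : V) : Finset V :=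
  A.filter fun y => y ≠ x ∧ ¬ G.Adj x y

/-- The induced subgraph of `G` on the vertex set `A` is vertex decomposable: it is
well-covered, and either it has no edges, or some vertex `x ∈ A` is such that deleting `x`,
respectively the closed neighbourhood of `x`, leaves a vertex decomposable graph. -/
def VertexDecomposableOn (G : SimpleGraph V) (A : Finset V) : Prop :=
  WellCoveredOn G A ∧
    ((∀ u ∈ A, ∀ v ∈ A, ¬ G.Adj u v) ∨
      ∃ x, ∃ _h : x ∈ A,
        VertexDecomposableOn G (A.erase x) ∧
        VertexDecomposableOn G (delClosedNbhd G A x))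
termination_by A.card
decreasing_by
  · exact Finset.card_erase_lt_of_mem (by assumption)
  · exact Finset.card_lt_card
      (Finset.filter_ssubset.mpr ⟨x, by assumption, by simp⟩)

/-- A finite simple graph is well-covered if all of its maximal independent sets have the
same cardinality. -/
def WellCovered (G : SimpleGraph V) [Fintype V] : Prop :=
  WellCoveredOn G Finset.univ

/-- A finite simple graph is vertex decomposable. -/
def VertexDecomposable (G : SimpleGraph V) [Fintype V] : Prop :=
  VertexDecomposableOn G Finset.univ

/-- The set of shedding vertices of `G` : those vertices `x` such that both `G \ x` and
`G \ N[x]` are vertex decomposable. -/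
def Shed (G : SimpleGraph V) [Fintype V] : Set V :=
  {x | VertexDecomposableOn G (Finset.univ.erase x) ∧
       VertexDecomposableOn G (delClosedNbhd G Finset.univ x)}

/-- `D` is a dominating set of `G`: every vertex not in `D` is adjacent to a vertex of `D`. -/
def IsDominatingSet (G : SimpleGraph V) (D : Set V) : Prop :=
  ∀ v, v ∉ D → ∃ u ∈ D, G.Adj u v

/-- A vertex is simplicial if its neighbourhood induces a clique. -/
def IsSimplicialVertex (G : SimpleGraph V) (x : V) : Prop :=
  ∀ u v, G.Adj x u → G.Adj x v → u ≠ v → G.Adj u v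

/-! ### Auxiliary lemmas -/

lemma vd_iff (G : SimpleGraph V) (A : Finset V) :
    VertexDecomposableOn G A ↔ WellCoveredOn G A ∧
    ((∀ u ∈ A, ∀ v ∈ A, ¬ G.Adj u v) ∨
      ∃ x, ∃ _h : x ∈ A,
        VertexDecomposableOn G (A.erase x) ∧
        VertexDecomposableOn G (delClosedNbhd G A x)) := by
  rw [VertexDecomposableOn]

lemma mem_delClosedNbhd {G : SimpleGraph V} {A : Finset V} {x y : V} :
    y ∈ delClosedNbhd G A x ↔ y ∈ A ∧ y ≠ x ∧ ¬ G.Adj x y := by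
  simp [delClosedNbhd]

lemma delClosedNbhd_subset_erase (G : SimpleGraph V) (A : Finset V) (x : V) :
    delClosedNbhd G A x ⊆ A.erase x := by
  intro y hy
  rw [mem_delClosedNbhd] at hy
  exact Finset.mem_erase.mpr ⟨hy.2.1, hy.1⟩

lemma delClosedNbhd_erase (G : SimpleGraph V) (A : Finset V) (z w : V) :
    delClosedNbhd G (A.erase z) w = (delClosedNbhd G A w).erase z := by
  ext y
  simp only [mem_delClosedNbhd, Finset.mem_erase]
  tauto

lemma delClosedNbhd_comm (G : SimpleGraph V) (A : Finset V) (z w : V) :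
    delClosedNbhd G (delClosedNbhd G A z) w = delClosedNbhd G (delClosedNbhd G A w) z := by
  ext y
  simp only [mem_delClosedNbhd]
  tauto

lemma vd_of_edgeless {G : SimpleGraph V} {A : Finset V}
    (h : ∀ u ∈ A, ∀ v ∈ A, ¬ G.Adj u v) : VertexDecomposableOn G A := by
  rw [vd_iff]
  refine ⟨?_, Or.inl h⟩
  have hmax : ∀ S, IsMaxIndepIn G A S → S = A := by
    intro S hS
    exact (hS.2 A ⟨Finset.Subset.refl A, h⟩ hS.1.1).symm
  intro S T hS hT
  rw [hmax S hS, hmax T hT]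

/-- Purity of links: deleting a closed neighbourhood preserves well-coveredness. -/
lemma wc_delClosedNbhd {G : SimpleGraph V} {A : Finset V} {w : V}
    (hWC : WellCoveredOn G A) (hw : w ∈ A) :
    WellCoveredOn G (delClosedNbhd G A w) := by
  have key : ∀ S, IsMaxIndepIn G (delClosedNbhd G A w) S →
      IsMaxIndepIn G A (insert w S) := by
    rintro S ⟨⟨hsub, hind⟩, hmax⟩
    have hwS : w ∉ S := fun h => (mem_delClosedNbhd.mp (hsub h)).2.1 rfl
    constructor
    · constructor
      · intro v hv
        rcases Finset.mem_insert.mp hv with rfl | hv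
        · exact hw
        · exact (mem_delClosedNbhd.mp (hsub hv)).1
      · intro u hu v hv
        rcases Finset.mem_insert.mp hu with rfl | hu'
        · rcases Finset.mem_insert.mp hv with rfl | hv'
          · exact fun h => G.loopless.irrefl _ h
          · exact (mem_delClosedNbhd.mp (hsub hv')).2.2
        · rcases Finset.mem_insert.mp hv with rfl | hv'
          · exact fun h => (mem_delClosedNbhd.mp (hsub hu')).2.2 h.symm
          · exact hind u hu' v hv'
    · intro T hT hsub2
      have hwT : w ∈ T := hsub2 (Finset.mem_insert_self w S)
      have hT' : IsIndepIn G (delClosedNbhd G A w) (T.erase w) := by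
        constructor
        · intro v hv
          obtain ⟨hvw, hvT⟩ := Finset.mem_erase.mp hv
          exact mem_delClosedNbhd.mpr ⟨hT.1 hvT, hvw, hT.2 w hwT v hvT⟩
        · intro u hu v hv
          exact hT.2 u (Finset.mem_erase.mp hu).2 v (Finset.mem_erase.mp hv).2
      have hST : S ⊆ T.erase w := fun s hs =>
        Finset.mem_erase.mpr ⟨fun h => hwS (h ▸ hs), hsub2 (Finset.mem_insert_of_mem hs)⟩
      have h1 := hmax _ hT' hST
      calc T = insert w (T.erase w) := (Finset.insert_erase hwT).symm
        _ = insert w S := by rw [h1]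
  intro S T hS hT
  have h1 := hWC _ _ (key S hS) (key T hT)
  have hwS : w ∉ S := fun h => (mem_delClosedNbhd.mp (hS.1.1 h)).2.1 rfl
  have hwT : w ∉ T := fun h => (mem_delClosedNbhd.mp (hT.1.1 h)).2.1 rfl
  rw [Finset.card_insert_of_notMem hwS, Finset.card_insert_of_notMem hwT] at h1
  omega

/-- Deleting a neighbour of a simplicial vertex preserves well-coveredness. -/
lemma wc_erase {G : SimpleGraph V} {A : Finset V} {x y : V}
    (hWC : WellCoveredOn G A) (hx : IsSimplicialVertex G x) (hxA : x ∈ A)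
    (hyA : y ∈ A) (hadj : G.Adj x y) :
    WellCoveredOn G (A.erase y) := by
  have key : ∀ S, IsMaxIndepIn G (A.erase y) S → IsMaxIndepIn G A S := by
    rintro S ⟨⟨hsub, hind⟩, hmax⟩
    have hdom : x ∈ S ∨ ∃ z ∈ S, G.Adj x z := by
      by_cases hxS : x ∈ S
      · exact Or.inl hxS
      right
      by_contra hno
      push_neg at hno
      have hins : IsIndepIn G (A.erase y) (insert x S) := by
        constructor
        · intro v hv
          rcases Finset.mem_insert.mp hv with rfl | hv
          · exact Finset.mem_erase.mpr ⟨hadj.ne, hxA⟩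
          · exact hsub hv
        · intro u hu v hv
          rcases Finset.mem_insert.mp hu with rfl | hu'
          · rcases Finset.mem_insert.mp hv with rfl | hv'
            · exact fun h => G.loopless.irrefl _ h
            · exact hno v hv'
          · rcases Finset.mem_insert.mp hv with rfl | hv'
            · exact fun h => hno u hu' h.symm
            · exact hind u hu' v hv'
      have := hmax _ hins (Finset.subset_insert x S)
      exact hxS (this ▸ Finset.mem_insert_self x S)
    refine ⟨⟨fun v hv => Finset.mem_of_mem_erase (hsub hv), hind⟩, ?_⟩
    intro T hT hST
    by_cases hyT : y ∈ T
    · exfalso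
      rcases hdom with hxS | ⟨z, hzS, hzadj⟩
      · exact hT.2 x (hST hxS) y hyT hadj
      · have hzy : z ≠ y := fun h => (Finset.mem_erase.mp (hsub (h ▸ hzS))).1 rfl
        exact hT.2 z (hST hzS) y hyT (hx z y hzadj hadj hzy)
    · exact hmax T ⟨fun v hv => Finset.mem_erase.mpr ⟨fun h => hyT (h ▸ hv), hT.1 hv⟩, hT.2⟩ hST
  intro S T hS hT
  exact hWC S T (key S hS) (key T hT)

/-- Deleting any closed neighbourhood of a vertex decomposable graph is vertex
decomposable (links of vertex decomposable complexes are vertex decomposable). -/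
lemma vd_delClosedNbhd {G : SimpleGraph V} :
    ∀ n (A : Finset V), A.card ≤ n → VertexDecomposableOn G A →
      ∀ w ∈ A, VertexDecomposableOn G (delClosedNbhd G A w) := by
  intro n
  induction n with
  | zero =>
    intro A hA _ w hw
    simp [Finset.card_eq_zero.mp (Nat.le_zero.mp hA)] at hw
  | succ n ih =>
    intro A hA hVD w hw
    rw [vd_iff] at hVD
    obtain ⟨hWC, hdec⟩ := hVD
    have hWC' := wc_delClosedNbhd hWC hw
    rcases hdec with hedge | ⟨z, hz, hvd1, hvd2⟩
    · exact vd_of_edgeless fun u hu v hv =>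
        hedge u (mem_delClosedNbhd.mp hu).1 v (mem_delClosedNbhd.mp hv).1
    have hApos : 1 ≤ A.card := Finset.card_pos.mpr ⟨z, hz⟩
    have hcard1 : (A.erase z).card ≤ n := by
      have := Finset.card_erase_of_mem hz
      omega
    have hcard2 : (delClosedNbhd G A z).card ≤ n := by
      have := Finset.card_le_card (delClosedNbhd_subset_erase G A z)
      have := Finset.card_erase_of_mem hz
      omega
    by_cases hzw : z = w
    · subst hzw
      exact hvd2
    by_cases hzB : z ∈ delClosedNbhd G A w
    · -- z is outside the closed neighbourhood of w: use z as shedding vertex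
      have hwz : w ∈ A.erase z := Finset.mem_erase.mpr ⟨fun h => hzw h.symm, hw⟩
      have h1 : VertexDecomposableOn G ((delClosedNbhd G A w).erase z) := by
        rw [← delClosedNbhd_erase]
        exact ih (A.erase z) hcard1 hvd1 w hwz
      have h2 : VertexDecomposableOn G (delClosedNbhd G (delClosedNbhd G A w) z) := by
        rw [delClosedNbhd_comm]
        refine ih (delClosedNbhd G A z) hcard2 hvd2 w ?_
        obtain ⟨-, hzw', hnadj⟩ := mem_delClosedNbhd.mp hzB
        exact mem_delClosedNbhd.mpr ⟨hw, fun h => hzw' h.symm, fun h => hnadj h.symm⟩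
      rw [vd_iff]
      exact ⟨hWC', Or.inr ⟨z, hzB, h1, h2⟩⟩
    · -- z is in the closed neighbourhood of w
      have heq : delClosedNbhd G (A.erase z) w = delClosedNbhd G A w := by
        rw [delClosedNbhd_erase, Finset.erase_eq_of_notMem hzB]
      rw [← heq]
      exact ih (A.erase z) hcard1 hvd1 w (Finset.mem_erase.mpr ⟨fun h => hzw h.symm, hw⟩)

/-- A well-covered graph containing a simplicial vertex `x` such that deleting the closed
neighbourhood of any `w ∈ N[x]` leaves a vertex decomposable graph is itself vertex
decomposable. -/
lemma vd_of_simplicial {G : SimpleGraph V} {x : V} (hx : IsSimplicialVertex G x) :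
    ∀ n (A : Finset V), A.card ≤ n → x ∈ A → WellCoveredOn G A →
      (∀ w ∈ A, (w = x ∨ G.Adj x w) → VertexDecomposableOn G (delClosedNbhd G A w)) →
      VertexDecomposableOn G A := by
  intro n
  induction n with
  | zero =>
    intro A hA hxA _ _
    simp [Finset.card_eq_zero.mp (Nat.le_zero.mp hA)] at hxA
  | succ n ih =>
    intro A hA hxA hWC hlinks
    by_cases hnb : ∃ y ∈ A, G.Adj x y
    · obtain ⟨y, hyA, hadj⟩ := hnb
      have hvd2 := hlinks y hyA (Or.inr hadj)
      have hvd1 : VertexDecomposableOn G (A.erase y) := by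
        refine ih (A.erase y) ?_ (Finset.mem_erase.mpr ⟨hadj.ne, hxA⟩)
          (wc_erase hWC hx hxA hyA hadj) ?_
        · have h1 := Finset.card_erase_of_mem hyA
          have h2 : 1 ≤ A.card := Finset.card_pos.mpr ⟨y, hyA⟩
          omega
        · intro w hw hwx
          have hyNw : y ∉ delClosedNbhd G A w := by
            rw [mem_delClosedNbhd]
            rintro ⟨-, hyw, hnadj⟩
            rcases hwx with rfl | hadj2
            · exact hnadj hadj
            · exact hnadj (hx w y hadj2 hadj (Finset.mem_erase.mp hw).1)
          rw [delClosedNbhd_erase, Finset.erase_eq_of_notMem hyNw]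
          exact hlinks w (Finset.mem_of_mem_erase hw) hwx
      rw [vd_iff]
      exact ⟨hWC, Or.inr ⟨y, hyA, hvd1, hvd2⟩⟩
    · push_neg at hnb
      have heq : delClosedNbhd G A x = A.erase x := by
        ext v
        rw [mem_delClosedNbhd, Finset.mem_erase]
        exact ⟨fun h => ⟨h.2.1, h.1⟩, fun h => ⟨h.2, h.1, hnb v h.2⟩⟩
      have hvd := hlinks x hxA (Or.inl rfl)
      rw [vd_iff]
      exact ⟨hWC, Or.inr ⟨x, hxA, heq ▸ hvd, hvd⟩⟩

/-- If `G` is vertex decomposable and `x` is a simplicial vertex, then every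
neighbour of `x` is a shedding vertex of `G`. -/
theorem statement2 {V : Type*} [Fintype V] (G : SimpleGraph V)
    (hG : VertexDecomposable G) (x : V) (hx : IsSimplicialVertex G x) :
    ∀ y, G.Adj x y → y ∈ Shed G := by
  intro y hadj
  have hWC : WellCoveredOn G Finset.univ := ((vd_iff G Finset.univ).mp hG).1
  refine ⟨?_, ?_⟩
  · -- G \ y is vertex decomposable
    refine vd_of_simplicial hx (Finset.univ.erase y).card (Finset.univ.erase y) le_rfl
      (Finset.mem_erase.mpr ⟨hadj.ne, Finset.mem_univ x⟩)
      (wc_erase hWC hx (Finset.mem_univ x) (Finset.mem_univ y) hadj) ?_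
    intro w hw hwx
    have hyNw : y ∉ delClosedNbhd G Finset.univ w := by
      rw [mem_delClosedNbhd]
      rintro ⟨-, hyw, hnadj⟩
      rcases hwx with rfl | hadj2
      · exact hnadj hadj
      · exact hnadj (hx w y hadj2 hadj (Finset.mem_erase.mp hw).1)
    rw [delClosedNbhd_erase, Finset.erase_eq_of_notMem hyNw]
    exact vd_delClosedNbhd Finset.univ.card Finset.univ le_rfl hG w (Finset.mem_univ w)
  · -- G \ N[y] is vertex decomposable
    exact vd_delClosedNbhd Finset.univ.card Finset.univ le_rfl hG y (Finset.mem_univ y)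
end

section
/- Let G be a finite simple chordal graph. Then G is vertex decomposable if and only if G is well-covered. -/
open scoped Classical

variable {V : Type*}

/-- A graph is chordal if every induced cycle has length three, i.e. there is no induced
cycle with four or more vertices. -/
def IsChordalGraph {W : Type*} (G : SimpleGraph W) : Prop :=
  ∀ n : ℕ, 4 ≤ n → IsEmpty (SimpleGraph.cycleGraph n ↪g G)

/-!
Dirac: if a vertex `v` of a chordal graph is not universal, let `C` be a component of the graph
outside `N[v]`. Its neighbourhood `S` lies in `N(v)` and is a clique, since two nonadjacent
vertices of `S`, a shortest path between them through `C`, and `v` would form an induced cycle of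
length at least four. By induction `C ∪ S` has a simplicial vertex outside the clique `S`; it lies
in `C`, so it is simplicial in the whole graph and not adjacent to `v`.

If `x` is simplicial and `y` is a neighbour of `x`, every maximal independent set of `G \ y`
contains `x` or a neighbour of `x`, hence a neighbour of `y`, so it is maximal in `G`. Thus
`G \ y` is well-covered when `G` is, as is `G \ N[y]` for any `y` (add `y` back), and induction
shows that well-covered chordal graphs are vertex decomposable.
-/

namespace SimpleGraph

theorem Walk.eq_add_one_of_adj_getVert {W : Type*} {H : SimpleGraph W} {u w : W}
    (p : H.Walk u w) (hp : p.length = H.dist u w) {i j : ℕ} (hij : i < j) (hj : j ≤ p.length)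
    (h : H.Adj (p.getVert i) (p.getVert j)) : j = i + 1 := by
  have hshort := H.dist_le (((p.take i).concat h).append (p.drop j))
  simp only [Walk.length_append, Walk.length_concat, Walk.take_length, Walk.drop_length] at hshort
  omega

theorem cycleGraph_adj_iff_val {n : ℕ} (hn : 2 ≤ n) (a b : Fin n) :
    (cycleGraph n).Adj a b ↔
      b.val = a.val + 1 ∨ a.val = b.val + 1 ∨ (a.val = n - 1 ∧ b.val = 0) ∨
        (b.val = n - 1 ∧ a.val = 0) := by
  have sub_val_eq_one (x y : Fin n) :
      (y - x).val = 1 ↔ y.val = x.val + 1 ∨ (x.val = n - 1 ∧ y.val = 0) := by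
    rw [Fin.sub_def]
    change (n - x.val + y.val) % n = 1 ↔ _
    rcases le_or_gt x.val y.val with h | h
    · rw [show n - x.val + y.val = y.val - x.val + n by omega, Nat.add_mod_right,
        Nat.mod_eq_of_lt (by omega)]
      omega
    · rw [Nat.mod_eq_of_lt (by omega)]
      omega
  rw [cycleGraph_adj', sub_val_eq_one b a, sub_val_eq_one a b]
  tauto

variable {G : SimpleGraph V}

theorem nonempty_cycleGraph_embedding_of_path_of_apex {m : ℕ} (hm : 2 ≤ m) (g : ℕ → V) (v : V)
    (hinj : ∀ i j, i ≤ m → j ≤ m → g i = g j → i = j)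
    (hadj : ∀ i j, i < j → j ≤ m → (G.Adj (g i) (g j) ↔ j = i + 1))
    (hv : ∀ i ≤ m, g i ≠ v) (hapex : ∀ i ≤ m, G.Adj (g i) v ↔ i = 0 ∨ i = m) :
    Nonempty (cycleGraph (m + 2) ↪g G) := by
  let f : ℕ → V := fun i => if i ≤ m then g i else v
  have f_adj : ∀ i j, i ≤ m + 1 → j ≤ m + 1 → (G.Adj (f i) (f j) ↔
      j = i + 1 ∨ i = j + 1 ∨ (i = m + 1 ∧ j = 0) ∨ (j = m + 1 ∧ i = 0)) := by
    intro i j hi hj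
    wlog hij : i ≤ j generalizing i j
    · rw [G.adj_comm, this j i hj hi (by omega)]
      omega
    rcases hij.lt_or_eq with hij | rfl
    · by_cases hjm : j ≤ m
      · simp only [f, if_pos hjm, if_pos (hij.le.trans hjm), hadj i j hij hjm]
        omega
      · simp only [f, if_neg hjm, if_pos (show i ≤ m by omega), hapex i (by omega)]
        omega
    · simp only [G.irrefl, false_iff]
      omega
  have f_inj : ∀ i j, i ≤ m + 1 → j ≤ m + 1 → f i = f j → i = j := by
    intro i j hi hj h
    by_cases him : i ≤ m <;> by_cases hjm : j ≤ m <;>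
      simp only [f, if_pos, if_neg, him, hjm, not_false_eq_true] at h
    · exact hinj i j him hjm h
    · exact absurd h (hv i him)
    · exact absurd h.symm (hv j hjm)
    · omega
  refine ⟨⟨⟨fun a => f a, fun a b h => Fin.ext (f_inj a b (by omega) (by omega) h)⟩, ?_⟩⟩
  intro a b
  change G.Adj (f a) (f b) ↔ _
  rw [f_adj a b (by omega) (by omega), cycleGraph_adj_iff_val (by omega)]
  omega

end SimpleGraph

open SimpleGraph

variable {G : SimpleGraph V}

theorem IsChordalGraph.adj_of_walk_outside_closedNbhd (hch : IsChordalGraph G) {v s₁ s₂ : V}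
    (h₁ : G.Adj v s₁) (h₂ : G.Adj v s₂) (hne : s₁ ≠ s₂) (p : G.Walk s₁ s₂)
    (hp : ∀ x ∈ p.support, x = s₁ ∨ x = s₂ ∨ (x ≠ v ∧ ¬ G.Adj v x)) : G.Adj s₁ s₂ := by
  by_contra hnadj
  let T : Set V := {x | x = s₁ ∨ x = s₂ ∨ (x ≠ v ∧ ¬ G.Adj v x)}
  have hreach : (G.induce T).Reachable ⟨s₁, Or.inl rfl⟩ ⟨s₂, Or.inr (Or.inl rfl)⟩ :=
    ⟨p.induce T hp⟩
  obtain ⟨q, hq_path, hq⟩ := hreach.exists_path_of_dist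
  have hm : 1 < q.length :=
    hq ▸ hreach.one_lt_dist_of_ne_of_not_adj (by simpa using hne) hnadj
  let g : ℕ → V := fun i => q.getVert i
  have g_inj : ∀ i j, i ≤ q.length → j ≤ q.length → g i = g j → i = j :=
    fun i j hi hj h => hq_path.getVert_injOn hi hj (Subtype.ext h)
  have g_zero : g 0 = s₁ := by simp [g]
  have g_last : g q.length = s₂ := by simp [g]
  have g_inner : ∀ i, 0 < i → i < q.length → g i ≠ v ∧ ¬ G.Adj v (g i) := by
    intro i hi0 hil
    rcases (q.getVert i).2 with h | h | h
    · exact absurd (g_inj i 0 hil.le (by omega) (h.trans g_zero.symm)) hi0.ne'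
    · exact absurd (g_inj i _ hil.le le_rfl (h.trans g_last.symm)) hil.ne
    · exact h
  refine (hch (q.length + 2) (by omega)).false
    (nonempty_cycleGraph_embedding_of_path_of_apex hm g v g_inj ?_ ?_ ?_).some
  · exact fun i j hij hj =>
      ⟨q.eq_add_one_of_adj_getVert hq hij hj, by rintro rfl; exact q.adj_getVert_succ (by omega)⟩
  · intro i hi
    rcases Nat.eq_zero_or_pos i with rfl | hi0
    · exact g_zero ▸ h₁.ne'
    rcases hi.lt_or_eq with hil | rfl
    · exact (g_inner i hi0 hil).1
    · exact g_last.symm ▸ h₂.ne'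
  · intro i hi
    rcases Nat.eq_zero_or_pos i with rfl | hi0
    · simpa [g_zero] using h₁.symm
    rcases hi.lt_or_eq with hil | rfl
    · simpa [hi0.ne', hil.ne] using mt G.adj_symm (g_inner i hi0 hil).2
    · simpa [g_last] using h₂.symm

noncomputable def componentIn (G : SimpleGraph V) (B : Finset V) (u : V) : Finset V :=
  B.filter fun c => ∃ p : G.Walk u c, ∀ y ∈ p.support, y ∈ B

section componentIn

variable {B : Finset V} {u : V}

theorem componentIn_subset : componentIn G B u ⊆ B := Finset.filter_subset _ _

theorem mem_componentIn_self (hu : u ∈ B) : u ∈ componentIn G B u :=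
  Finset.mem_filter.mpr ⟨hu, .nil, by simpa using hu⟩

theorem mem_componentIn_of_adj {b c : V} (hc : c ∈ componentIn G B u) (hb : b ∈ B)
    (hcb : G.Adj c b) : b ∈ componentIn G B u := by
  obtain ⟨p, hp⟩ := (Finset.mem_filter.mp hc).2
  refine Finset.mem_filter.mpr ⟨hb, p.concat hcb, fun y hy => ?_⟩
  simp only [Walk.support_concat, List.mem_append, List.mem_singleton] at hy
  rcases hy with hy | rfl
  exacts [hp y hy, hb]

theorem exists_walk_of_mem_componentIn {c₁ c₂ : V} (hc₁ : c₁ ∈ componentIn G B u)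
    (hc₂ : c₂ ∈ componentIn G B u) : ∃ p : G.Walk c₁ c₂, ∀ y ∈ p.support, y ∈ B := by
  obtain ⟨p₁, hp₁⟩ := (Finset.mem_filter.mp hc₁).2
  obtain ⟨p₂, hp₂⟩ := (Finset.mem_filter.mp hc₂).2
  refine ⟨p₁.reverse.append p₂, fun y hy => ?_⟩
  rcases (Walk.mem_support_append_iff _ _).mp hy with hy | hy
  exacts [hp₁ y (by simpa using hy), hp₂ y hy]

end componentIn

def IsSimplicialIn (G : SimpleGraph V) (A : Finset V) (x : V) : Prop :=
  ∀ u ∈ A, ∀ w ∈ A, G.Adj x u → G.Adj x w → u ≠ w → G.Adj u w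

theorem IsSimplicialIn.of_neighbors_subset {A A' : Finset V} {x : V}
    (hx : IsSimplicialIn G A' x) (hnbhd : ∀ y ∈ A, G.Adj x y → y ∈ A') : IsSimplicialIn G A x :=
  fun u hu w hw hxu hxw huw => hx u (hnbhd u hu hxu) w (hnbhd w hw hxw) hxu hxw huw

theorem IsChordalGraph.exists_simplicialIn_mem_delClosedNbhd (hch : IsChordalGraph G)
    {A : Finset V} (ih : ∀ A' ⊂ A, ∀ K : Finset V, G.IsClique (K : Set V) →
      (A' \ K).Nonempty → ∃ x ∈ A' \ K, IsSimplicialIn G A' x)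
    {u v : V} (hv : v ∈ A) (hu : u ∈ delClosedNbhd G A v) :
    ∃ x ∈ delClosedNbhd G A v, IsSimplicialIn G A x := by
  set B := delClosedNbhd G A v
  set C := componentIn G B u
  let S : Finset V := A.filter fun s => s ∉ C ∧ ∃ c ∈ C, G.Adj c s
  have mem_B {y : V} : y ∈ B ↔ y ∈ A ∧ y ≠ v ∧ ¬ G.Adj v y := Finset.mem_filter
  have hCB : C ⊆ B := componentIn_subset
  have huC : u ∈ C := mem_componentIn_self hu
  have hS_adj : ∀ s ∈ S, G.Adj v s := by
    intro s hs
    obtain ⟨hsA, hsC, c, hc, hcs⟩ := Finset.mem_filter.mp hs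
    obtain ⟨-, hcv, hvc⟩ := mem_B.mp (hCB hc)
    by_contra hvs
    have hsv : s ≠ v := by rintro rfl; exact hvc hcs.symm
    exact hsC (mem_componentIn_of_adj hc (mem_B.mpr ⟨hsA, hsv, hvs⟩) hcs)
  have hS_clique : G.IsClique (S : Set V) := by
    intro s₁ hs₁ s₂ hs₂ hne
    obtain ⟨-, -, c₁, hc₁, hc₁s₁⟩ := Finset.mem_filter.mp hs₁
    obtain ⟨-, -, c₂, hc₂, hc₂s₂⟩ := Finset.mem_filter.mp hs₂
    obtain ⟨p, hp⟩ := exists_walk_of_mem_componentIn hc₁ hc₂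
    refine hch.adj_of_walk_outside_closedNbhd (hS_adj s₁ hs₁) (hS_adj s₂ hs₂) hne
      ((p.concat hc₂s₂).cons hc₁s₁.symm) fun y hy => ?_
    simp only [Walk.support_cons, Walk.support_concat, List.mem_cons, List.mem_append,
      List.not_mem_nil, or_false] at hy
    rcases hy with rfl | hy | rfl
    · exact Or.inl rfl
    · exact Or.inr (Or.inr (mem_B.mp (hp y hy)).2)
    · exact Or.inr (Or.inl rfl)
  have hCS : C ∪ S ⊂ A := by
    refine Finset.ssubset_iff_of_subset (Finset.union_subset
      (hCB.trans (Finset.filter_subset _ _)) (Finset.filter_subset _ _)) |>.mpr ⟨v, hv, ?_⟩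
    intro hvCS
    rcases Finset.mem_union.mp hvCS with hvC | hvS
    · exact (mem_B.mp (hCB hvC)).2.1 rfl
    · exact G.irrefl (hS_adj v hvS)
  have huS : u ∉ S := fun h => (Finset.mem_filter.mp h).2.1 huC
  obtain ⟨x, hx, hxs⟩ :=
    ih (C ∪ S) hCS S hS_clique ⟨u, Finset.mem_sdiff.mpr ⟨Finset.mem_union_left _ huC, huS⟩⟩
  obtain ⟨hxCS, hxS⟩ := Finset.mem_sdiff.mp hx
  have hxC : x ∈ C := (Finset.mem_union.mp hxCS).resolve_right hxS
  refine ⟨x, hCB hxC, hxs.of_neighbors_subset fun y hy hxy => ?_⟩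
  by_cases hyC : y ∈ C
  · exact Finset.mem_union_left _ hyC
  · exact Finset.mem_union_right _ (Finset.mem_filter.mpr ⟨hy, hyC, x, hxC, hxy⟩)

theorem IsChordalGraph.exists_simplicialIn_not_mem_clique (hch : IsChordalGraph G)
    (A K : Finset V) (hK : G.IsClique (K : Set V)) (hAK : (A \ K).Nonempty) :
    ∃ x ∈ A \ K, IsSimplicialIn G A x := by
  induction A using Finset.strongInduction generalizing K with
  | H A ih =>
  obtain ⟨a, ha⟩ := hAK
  by_cases hA : G.IsClique (A : Set V)
  · exact ⟨a, ha, fun u hu w hw _ _ huw => hA hu hw huw⟩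
  -- a vertex outside `N[v]` avoids `K` if `v ∈ K`, and also if every vertex of `K` is universal
  by_cases hKv : ∃ v ∈ K, v ∈ A ∧ (delClosedNbhd G A v).Nonempty
  · obtain ⟨v, hvK, hvA, u, hu⟩ := hKv
    obtain ⟨x, hx, hxs⟩ := hch.exists_simplicialIn_mem_delClosedNbhd ih hvA hu
    obtain ⟨hxA, hxv, hvx⟩ := Finset.mem_filter.mp hx
    exact ⟨x, Finset.mem_sdiff.mpr ⟨hxA, fun hxK => hvx (hK hvK hxK hxv.symm)⟩, hxs⟩
  · obtain ⟨v, hvA, u, huA, hvu, hnadj⟩ : ∃ v ∈ A, ∃ u ∈ A, v ≠ u ∧ ¬ G.Adj v u := by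
      simpa [SimpleGraph.isClique_iff, Set.Pairwise] using hA
    obtain ⟨x, hx, hxs⟩ := hch.exists_simplicialIn_mem_delClosedNbhd ih hvA
      (Finset.mem_filter.mpr ⟨huA, hvu.symm, hnadj⟩)
    obtain ⟨hxA, hxv, hvx⟩ := Finset.mem_filter.mp hx
    refine ⟨x, Finset.mem_sdiff.mpr ⟨hxA, fun hxK => hKv ⟨x, hxK, hxA, v, ?_⟩⟩, hxs⟩
    exact Finset.mem_filter.mpr ⟨hvA, hxv.symm, fun h => hvx h.symm⟩

theorem IsChordalGraph.exists_simplicialIn_adj (hch : IsChordalGraph G) {A : Finset V}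
    {u w : V} (hu : u ∈ A) (hw : w ∈ A) (huw : G.Adj u w) :
    ∃ x ∈ A, ∃ y ∈ A, G.Adj x y ∧ IsSimplicialIn G A x := by
  let A' := A.filter fun x => ∃ y ∈ A, G.Adj x y
  obtain ⟨x, hx, hxs⟩ := hch.exists_simplicialIn_not_mem_clique A' ∅ (by simp)
    ⟨u, by simpa [A'] using ⟨hu, w, hw, huw⟩⟩
  obtain ⟨hxA, y, hyA, hxy⟩ := Finset.mem_filter.mp (Finset.mem_sdiff.mp hx).1
  exact ⟨x, hxA, y, hyA, hxy,
    hxs.of_neighbors_subset fun z hz hxz => Finset.mem_filter.mpr ⟨hz, x, hxA, hxz.symm⟩⟩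

theorem isMaxIndepIn_iff_forall_exists_adj {A S : Finset V} :
    IsMaxIndepIn G A S ↔ IsIndepIn G A S ∧ ∀ w ∈ A, w ∉ S → ∃ z ∈ S, G.Adj z w := by
  refine ⟨fun ⟨hS, hmax⟩ => ⟨hS, fun w hw hwS => ?_⟩, fun ⟨hS, hdom⟩ => ⟨hS, fun T hT hST => ?_⟩⟩
  · by_contra! hnadj
    have hins : IsIndepIn G A (insert w S) := by
      refine ⟨Finset.insert_subset hw hS.1, fun a ha b hb => ?_⟩
      rcases Finset.mem_insert.mp ha with rfl | ha' <;>
        rcases Finset.mem_insert.mp hb with rfl | hb'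
      exacts [G.irrefl, fun h => hnadj b hb' h.symm, hnadj a ha', hS.2 a ha' b hb']
    exact hwS (hmax _ hins (Finset.subset_insert w S) ▸ Finset.mem_insert_self w S)
  · refine Finset.Subset.antisymm (fun w hwT => ?_) hST
    by_contra hwS
    obtain ⟨z, hzS, hzw⟩ := hdom w (hT.1 hwT) hwS
    exact hT.2 z (hST hzS) w hwT hzw

theorem IsMaxIndepIn.insert_of_delClosedNbhd {A S : Finset V} {y : V} (hy : y ∈ A)
    (hS : IsMaxIndepIn G (delClosedNbhd G A y) S) : IsMaxIndepIn G A (insert y S) := by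
  obtain ⟨⟨hSsub, hSind⟩, hdom⟩ := isMaxIndepIn_iff_forall_exists_adj.mp hS
  have mem_del {w : V} : w ∈ delClosedNbhd G A y ↔ w ∈ A ∧ w ≠ y ∧ ¬ G.Adj y w :=
    Finset.mem_filter
  refine isMaxIndepIn_iff_forall_exists_adj.mpr ⟨⟨?_, fun a ha b hb => ?_⟩, fun w hw hwS => ?_⟩
  · exact Finset.insert_subset hy fun w hw => (mem_del.mp (hSsub hw)).1
  · rcases Finset.mem_insert.mp ha with rfl | ha' <;>
      rcases Finset.mem_insert.mp hb with rfl | hb'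
    exacts [G.irrefl, (mem_del.mp (hSsub hb')).2.2, fun h => (mem_del.mp (hSsub ha')).2.2 h.symm,
      hSind a ha' b hb']
  · by_cases hyw : G.Adj y w
    · exact ⟨y, Finset.mem_insert_self y S, hyw⟩
    obtain ⟨hwy, hwS⟩ := not_or.mp (Finset.mem_insert.not.mp hwS)
    obtain ⟨z, hzS, hzw⟩ := hdom w (mem_del.mpr ⟨hw, hwy, hyw⟩) hwS
    exact ⟨z, Finset.mem_insert_of_mem hzS, hzw⟩

theorem IsMaxIndepIn.of_erase_of_adj_simplicialIn {A S : Finset V} {x y : V} (hxA : x ∈ A)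
    (hxs : IsSimplicialIn G A x) (hxy : G.Adj x y) (hS : IsMaxIndepIn G (A.erase y) S) :
    IsMaxIndepIn G A S := by
  obtain ⟨⟨hSsub, hSind⟩, hdom⟩ := isMaxIndepIn_iff_forall_exists_adj.mp hS
  refine isMaxIndepIn_iff_forall_exists_adj.mpr
    ⟨⟨hSsub.trans (Finset.erase_subset y A), hSind⟩, fun w hw hwS => ?_⟩
  rcases eq_or_ne w y with rfl | hwy
  · by_cases hxS : x ∈ S
    · exact ⟨x, hxS, hxy⟩
    obtain ⟨z, hzS, hzx⟩ := hdom x (Finset.mem_erase.mpr ⟨hxy.ne, hxA⟩) hxS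
    obtain ⟨hzw, hzA⟩ := Finset.mem_erase.mp (hSsub hzS)
    exact ⟨z, hzS, hxs z hzA w hw hzx.symm hxy hzw⟩
  · exact hdom w (Finset.mem_erase.mpr ⟨hwy, hw⟩) hwS

theorem WellCoveredOn.delClosedNbhd_of_mem {A : Finset V} {y : V} (hwc : WellCoveredOn G A)
    (hy : y ∈ A) : WellCoveredOn G (delClosedNbhd G A y) := by
  have hyS : ∀ S, IsMaxIndepIn G (delClosedNbhd G A y) S → y ∉ S :=
    fun S hS hyS => (Finset.mem_filter.mp (hS.1.1 hyS)).2.1 rfl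
  intro S T hS hT
  have h := hwc _ _ (hS.insert_of_delClosedNbhd hy) (hT.insert_of_delClosedNbhd hy)
  rwa [Finset.card_insert_of_notMem (hyS S hS), Finset.card_insert_of_notMem (hyS T hT),
    Nat.add_right_cancel_iff] at h

theorem WellCoveredOn.erase_of_adj_simplicialIn {A : Finset V} {x y : V}
    (hwc : WellCoveredOn G A) (hxA : x ∈ A) (hxs : IsSimplicialIn G A x) (hxy : G.Adj x y) :
    WellCoveredOn G (A.erase y) := fun S T hS hT =>
  hwc S T (hS.of_erase_of_adj_simplicialIn hxA hxs hxy)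
    (hT.of_erase_of_adj_simplicialIn hxA hxs hxy)

theorem IsChordalGraph.vertexDecomposableOn_of_wellCoveredOn (hch : IsChordalGraph G)
    {A : Finset V} (hwc : WellCoveredOn G A) : VertexDecomposableOn G A := by
  induction A using Finset.strongInduction with
  | H A ih =>
  rw [VertexDecomposableOn]
  refine ⟨hwc, or_iff_not_imp_left.mpr fun hedge => ?_⟩
  obtain ⟨u, hu, w, hw, huw⟩ : ∃ u ∈ A, ∃ w ∈ A, G.Adj u w := by simpa using hedge
  obtain ⟨x, hxA, y, hyA, hxy, hxs⟩ := hch.exists_simplicialIn_adj hu hw huw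
  exact ⟨y, hyA, ih _ (Finset.erase_ssubset hyA) (hwc.erase_of_adj_simplicialIn hxA hxs hxy),
    ih _ (Finset.filter_ssubset.mpr ⟨y, hyA, by simp⟩) (hwc.delClosedNbhd_of_mem hyA)⟩

/-- A chordal graph is vertex decomposable if and only if it is well-covered. -/
theorem statement4 {V : Type*} [Fintype V] (G : SimpleGraph V)
    (hch : IsChordalGraph G) :
    VertexDecomposable G ↔ WellCovered G := by
  refine ⟨fun h => ?_, hch.vertexDecomposableOn_of_wellCoveredOn⟩
  rw [VertexDecomposable, VertexDecomposableOn] at h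
  exact h.1
end

section
/- Let G be a finite simple graph on vertex set {x_1, ..., x_n} with a clique vertex partition π = {W_1, ..., W_t}, and let G^π be the clique-whiskered graph. Then Shed(G^π) is a dominating set of G^π; in fact {x_1, ..., x_n} ⊆ Shed(G^π) and this subset is a dominating set of G^π. -/
open scoped Classical

variable {V : Type*}

/-- The clique-whiskered graph `G^π`, where the clique vertex partition `π` is given by the
fibres of a surjection `c : V → ι` (part `W i` is `c ⁻¹' {i}`, with whisker vertex `w i`):
the original edges of `G` are kept, and each `x : V` is joined to the new vertex `c x`. -/
def cliqueWhisker {V ι : Type*} (G : SimpleGraph V) (c : V → ι) : SimpleGraph (V ⊕ ι) :=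
  SimpleGraph.fromRel fun p q =>
    match p, q with
    | Sum.inl u, Sum.inl v => G.Adj u v
    | Sum.inl u, Sum.inr i => c u = i
    | _, _ => False


/-!
Write `S ⊔ T ⊆ V ⊕ ι` for a set `S` of original vertices and a set `T` of whisker vertices
with `c(S) ⊆ T`. Each part `W_i` together with its whisker `w_i` is a clique, so an independent
set of `G^π[S ⊔ T]` meets each of these cliques at most once, and a maximal one meets each
`W_i ∪ {w_i}` with `i ∈ T` (otherwise `w_i` could be added): all maximal independent sets have
`|T|` elements. Deleting an original vertex `x`, or its closed neighbourhood, leaves a set of the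
same shape (`S \ {x}` and `T`, resp. the non-neighbours of `x` in `S` and `T \ {c x}`), so
induction on `|S|` shows that all `G^π[S ⊔ T]` are vertex decomposable and every original vertex
is a shedding vertex. The whiskers are dominated since every part is nonempty.
-/

lemma IsIndepIn.insert [DecidableEq V] {G : SimpleGraph V} {A S : Finset V} {x : V}
    (hS : IsIndepIn G A S) (hx : x ∈ A) (hxS : ∀ y ∈ S, ¬ G.Adj x y) :
    IsIndepIn G A (insert x S) := by
  refine ⟨Finset.insert_subset hx hS.1, ?_⟩
  simp only [Finset.mem_insert]
  rintro u (rfl | hu) v (rfl | hv)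
  · exact G.loopless.irrefl _
  · exact hxS v hv
  · exact fun hux => hxS u hu hux.symm
  · exact hS.2 u hu v hv

lemma delClosedNbhd_ssubset {G : SimpleGraph V} {A : Finset V} {x : V} (hx : x ∈ A) :
    delClosedNbhd G A x ⊂ A :=
  Finset.filter_ssubset.mpr ⟨x, hx, by simp⟩

lemma IsDominatingSet.mono {G : SimpleGraph V} {D E : Set V} (hD : IsDominatingSet G D)
    (hDE : D ⊆ E) : IsDominatingSet G E := fun v hv =>
  let ⟨u, hu, huv⟩ := hD v fun hvD => hv (hDE hvD)
  ⟨u, hDE hu, huv⟩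

namespace Finset

lemma disjSum_erase_inl {α β : Type*} [DecidableEq α] [DecidableEq (α ⊕ β)] (s : Finset α)
    (t : Finset β) (a : α) : (s.disjSum t).erase (Sum.inl a) = (s.erase a).disjSum t := by
  ext (b | b) <;> simp

end Finset

section CliqueWhisker

variable {ι : Type*} {G : SimpleGraph V} {c : V → ι}

@[simp]
lemma cliqueWhisker_adj_inl_inl {u v : V} :
    (cliqueWhisker G c).Adj (Sum.inl u) (Sum.inl v) ↔ G.Adj u v := by
  simp only [cliqueWhisker, SimpleGraph.fromRel_adj, ne_eq, Sum.inl.injEq]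
  exact ⟨fun ⟨_, h⟩ => h.elim id G.adj_symm, fun h => ⟨h.ne, Or.inl h⟩⟩

@[simp]
lemma cliqueWhisker_adj_inl_inr {u : V} {i : ι} :
    (cliqueWhisker G c).Adj (Sum.inl u) (Sum.inr i) ↔ c u = i := by
  simp [cliqueWhisker]

@[simp]
lemma cliqueWhisker_adj_inr_inl {u : V} {i : ι} :
    (cliqueWhisker G c).Adj (Sum.inr i) (Sum.inl u) ↔ c u = i := by
  simp [cliqueWhisker]

@[simp]
lemma cliqueWhisker_not_adj_inr_inr {i j : ι} :
    ¬ (cliqueWhisker G c).Adj (Sum.inr i) (Sum.inr j) := by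
  simp [cliqueWhisker]

lemma delClosedNbhd_cliqueWhisker_inl (S : Finset V) (T : Finset ι) (x : V) :
    delClosedNbhd (cliqueWhisker G c) (S.disjSum T) (Sum.inl x) =
      (delClosedNbhd G S x).disjSum (T.erase (c x)) := by
  ext (v | i) <;> simp [delClosedNbhd, and_comm, eq_comm]

lemma surjOn_elim_of_isMaxIndepIn {S : Finset V} {T : Finset ι} {M : Finset (V ⊕ ι)}
    (hM : IsMaxIndepIn (cliqueWhisker G c) (S.disjSum T) M) :
    Set.SurjOn (Sum.elim c id) M T := by
  intro i hi
  by_contra hmiss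
  have hfree : ∀ a ∈ M, ¬ (cliqueWhisker G c).Adj (Sum.inr i) a := by
    rintro (v | j) ha hadj
    · exact hmiss ⟨Sum.inl v, ha, (cliqueWhisker_adj_inr_inl.mp hadj : c v = i)⟩
    · exact cliqueWhisker_not_adj_inr_inr hadj
  have hins := hM.2 _ (hM.1.insert (Finset.inr_mem_disjSum.mpr hi) hfree)
    (Finset.subset_insert _ _)
  exact hmiss ⟨Sum.inr i, hins ▸ Finset.mem_insert_self _ _, rfl⟩

lemma isDominatingSet_range_inl_cliqueWhisker (hsurj : Function.Surjective c) :
    IsDominatingSet (cliqueWhisker G c) (Set.range Sum.inl) := by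
  rintro (x | i) hv
  · exact (hv ⟨x, rfl⟩).elim
  · obtain ⟨u, rfl⟩ := hsurj i
    exact ⟨Sum.inl u, ⟨u, rfl⟩, cliqueWhisker_adj_inl_inr.mpr rfl⟩

variable (hclique : ∀ u v, c u = c v → u ≠ v → G.Adj u v)
include hclique

lemma mapsTo_delClosedNbhd {S : Finset V} {T : Finset ι} (hST : ∀ v ∈ S, c v ∈ T) (x : V) :
    ∀ v ∈ delClosedNbhd G S x, c v ∈ T.erase (c x) := by
  intro v hv
  simp only [delClosedNbhd, Finset.mem_filter] at hv
  exact Finset.mem_erase.mpr ⟨fun h => hv.2.2 (hclique x v h.symm (Ne.symm hv.2.1)), hST v hv.1⟩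

lemma injOn_elim_of_isIndepIn {A M : Finset (V ⊕ ι)} (hM : IsIndepIn (cliqueWhisker G c) A M) :
    Set.InjOn (Sum.elim c id) M := by
  rintro (v | i) hv (w | j) hw h <;> simp only [Sum.elim_inl, Sum.elim_inr, id] at h
  · by_contra hne
    exact hM.2 _ hv _ hw (cliqueWhisker_adj_inl_inl.mpr (hclique v w h fun h' => hne (h' ▸ rfl)))
  · exact (hM.2 _ hv _ hw (cliqueWhisker_adj_inl_inr.mpr h)).elim
  · exact (hM.2 _ hv _ hw (cliqueWhisker_adj_inr_inl.mpr h.symm)).elim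
  · exact congrArg Sum.inr h

lemma card_eq_of_isMaxIndepIn {S : Finset V} {T : Finset ι} (hST : ∀ v ∈ S, c v ∈ T)
    {M : Finset (V ⊕ ι)} (hM : IsMaxIndepIn (cliqueWhisker G c) (S.disjSum T) M) :
    M.card = T.card := by
  refine Finset.card_nbij (Sum.elim c id) ?_ (injOn_elim_of_isIndepIn hclique hM.1)
    (surjOn_elim_of_isMaxIndepIn hM)
  rintro (v | i) ha
  · exact hST v (Finset.inl_mem_disjSum.mp (hM.1.1 ha))
  · exact Finset.inr_mem_disjSum.mp (hM.1.1 ha)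

lemma wellCoveredOn_disjSum {S : Finset V} {T : Finset ι} (hST : ∀ v ∈ S, c v ∈ T) :
    WellCoveredOn (cliqueWhisker G c) (S.disjSum T) := fun _ _ hM hN => by
  rw [card_eq_of_isMaxIndepIn hclique hST hM, card_eq_of_isMaxIndepIn hclique hST hN]

lemma vertexDecomposableOn_disjSum (S : Finset V) (T : Finset ι) (hST : ∀ v ∈ S, c v ∈ T) :
    VertexDecomposableOn (cliqueWhisker G c) (S.disjSum T) := by
  induction S using Finset.strongInduction generalizing T with
  | H S ih =>
    rw [VertexDecomposableOn]
    refine ⟨wellCoveredOn_disjSum hclique hST, ?_⟩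
    rcases S.eq_empty_or_nonempty with rfl | ⟨x, hx⟩
    · left
      simp [Finset.empty_disjSum]
    · right
      refine ⟨Sum.inl x, Finset.inl_mem_disjSum.mpr hx, ?_, ?_⟩
      -- `rw` would reject the goal's classical `DecidableEq (V ⊕ ι)` instance; `simp` accepts it
      · simp only [Finset.disjSum_erase_inl]
        exact ih _ (Finset.erase_ssubset hx) T fun v hv => hST v (Finset.mem_of_mem_erase hv)
      · rw [delClosedNbhd_cliqueWhisker_inl]
        exact ih _ (delClosedNbhd_ssubset hx) _ (mapsTo_delClosedNbhd hclique hST x)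

lemma inl_mem_shed_cliqueWhisker [Fintype V] [Fintype ι] (x : V) :
    Sum.inl x ∈ Shed (cliqueWhisker G c) := by
  have hST (S : Finset V) : ∀ v ∈ S, c v ∈ Finset.univ := fun v _ => Finset.mem_univ (c v)
  simp only [Shed, Set.mem_ofPred_eq, ← Finset.univ_disjSum_univ, Finset.disjSum_erase_inl,
    delClosedNbhd_cliqueWhisker_inl]
  exact ⟨vertexDecomposableOn_disjSum hclique _ _ (hST _),
    vertexDecomposableOn_disjSum hclique _ _ (mapsTo_delClosedNbhd hclique (hST _) x)⟩

end CliqueWhisker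

/-- For a graph `G` with a clique vertex partition (each part is a nonempty
clique), the original vertices all belong to `Shed(G^π)` and form a dominating set of `G^π`;
in particular `Shed(G^π)` is a dominating set of `G^π`. -/
theorem statement7 {V ι : Type*} [Fintype V] [Fintype ι] (G : SimpleGraph V)
    (c : V → ι) (hclique : ∀ u v, c u = c v → u ≠ v → G.Adj u v)
    (hsurj : Function.Surjective c) :
    (∀ x : V, Sum.inl x ∈ Shed (cliqueWhisker G c)) ∧
    IsDominatingSet (cliqueWhisker G c) (Set.range (Sum.inl : V → V ⊕ ι)) ∧
    IsDominatingSet (cliqueWhisker G c) (Shed (cliqueWhisker G c)) := by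
  have hshed := inl_mem_shed_cliqueWhisker hclique
  have hdom := isDominatingSet_range_inl_cliqueWhisker (G := G) hsurj
  exact ⟨hshed, hdom, hdom.mono (Set.range_subset_iff.mpr hshed)⟩
end
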